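/- arXiv:2001.05306 — 2 statements merged into one kernel-verified Lean document; each statement's English description precedes it below -/
import Mathlib

section
/- In a generalized principal lattice X of degree n, if ℓ = ℓ_{n−k+1}^r is a k-node line (k ≥ 2, r ∈ {0,1,2}), then the set of nodes using ℓ equals X \ (ℓ_0^r ∪ ℓ_1^r ∪ ⋯ ∪ ℓ_{n−k+1}^r); in particular exactly k(k−1)/2 nodes use ℓ. -/
/-!
A polynomial of degree at most `m` vanishing at `m + 1` points of a line is divisible by the
line, since along a parametrisation of the line it becomes a univariate polynomial with too many
roots. Dividing successively by `ℓ_0^0, ℓ_1^0, …`, a polynomial of degree at most `n` vanishing on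
`X` is zero, so the fundamental polynomial of `x_{ijk}` is unique and is the normalised product of
`ℓ_t^0 (t < i)`, `ℓ_t^1 (t < j)`, `ℓ_t^2 (t < k)`. Linear polynomials are prime and the lines are
pairwise distinct, so `x_{ijk}` uses `ℓ_s^r` exactly when `s` is smaller than its `r`-th index,
i.e. when it lies on none of `ℓ_0^r, …, ℓ_s^r`. These nodes fill the lines `ℓ_t^r`, `t > s`,
which carry `k - 1, …, 2, 1` nodes.
-/

attribute [local instance] Classical.propDecidable

/-- Evaluate a bivariate polynomial at a point of the plane. -/
noncomputable def evalPt (p : MvPolynomial (Fin 2) ℝ) (A : ℝ × ℝ) : ℝ :=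
  MvPolynomial.eval ![A.1, A.2] p

/-- A (polynomial defining a) line: a bivariate polynomial of total degree exactly 1. -/
def IsLinearPoly (l : MvPolynomial (Fin 2) ℝ) : Prop := l.totalDegree = 1

/-- A point lies on the line defined by `l`. -/
def OnLine (l : MvPolynomial (Fin 2) ℝ) (A : ℝ × ℝ) : Prop := evalPt l A = 0

/-- Two degree-1 polynomials define the same line (same zero set). -/
def SameLine (l₁ l₂ : MvPolynomial (Fin 2) ℝ) : Prop := ∀ P, OnLine l₁ P ↔ OnLine l₂ P

/-- `X` is an `n`-correct set of nodes in the plane. -/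
def NCorrect (n : ℕ) (X : Finset (ℝ × ℝ)) : Prop :=
  X.card = (n + 2) * (n + 1) / 2 ∧
  ∀ c : (ℝ × ℝ) → ℝ, ∃! p : MvPolynomial (Fin 2) ℝ,
    p.totalDegree ≤ n ∧ ∀ A ∈ X, evalPt p A = c A

/-- `p` is the `n`-fundamental polynomial of node `A` in `X`. -/
def IsFundamental (n : ℕ) (X : Finset (ℝ × ℝ)) (A : ℝ × ℝ)
    (p : MvPolynomial (Fin 2) ℝ) : Prop :=
  p.totalDegree ≤ n ∧ evalPt p A = 1 ∧ ∀ B ∈ X, B ≠ A → evalPt p B = 0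

/-- Node `A` of `X` uses line `l`. -/
def Uses (n : ℕ) (X : Finset (ℝ × ℝ)) (A : ℝ × ℝ) (l : MvPolynomial (Fin 2) ℝ) : Prop :=
  ∃ p, IsFundamental n X A p ∧ l ∣ p

/-- The set of nodes of `X` using the line `l` (the set `Xˡ`). -/
noncomputable def UsedSet (n : ℕ) (X : Finset (ℝ × ℝ)) (l : MvPolynomial (Fin 2) ℝ) :
    Finset (ℝ × ℝ) := X.filter (fun A => Uses n X A l)

/-- `l` is a maximal line of `X`: a line passing through exactly `n+1` nodes. -/
def IsMaximalLine (n : ℕ) (X : Finset (ℝ × ℝ)) (l : MvPolynomial (Fin 2) ℝ) : Prop :=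
  IsLinearPoly l ∧ (X.filter (fun A => OnLine l A)).card = n + 1

/-- `X` is a `GC_n` set. -/
def GCSet (n : ℕ) (X : Finset (ℝ × ℝ)) : Prop :=
  NCorrect n X ∧
  ∀ A ∈ X, ∃ f : Fin n → MvPolynomial (Fin 2) ℝ,
    (∀ i, IsLinearPoly (f i)) ∧ IsFundamental n X A (∏ i, f i)

/-- `L` is a set of representatives (one per line) of all maximal lines of `X`. -/
def MaximalLinesRep (n : ℕ) (X : Finset (ℝ × ℝ))
    (L : Finset (MvPolynomial (Fin 2) ℝ)) : Prop :=
  (∀ l ∈ L, IsMaximalLine n X l) ∧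
  (∀ l₁ ∈ L, ∀ l₂ ∈ L, SameLine l₁ l₂ → l₁ = l₂) ∧
  (∀ l, IsMaximalLine n X l → ∃ l' ∈ L, SameLine l l')

/-- A maximal line `lam` is `l`-disjoint: it meets `l` at no node of `X`. -/
def IsDisjointMax (n : ℕ) (X : Finset (ℝ × ℝ)) (l lam : MvPolynomial (Fin 2) ℝ) : Prop :=
  IsMaximalLine n X lam ∧ ∀ A ∈ X, ¬(OnLine lam A ∧ OnLine l A)

/-- A maximal line `lam` is a member of a pair of `l`-adjoint maximal lines. -/
def IsAdjointMax (n : ℕ) (X : Finset (ℝ × ℝ)) (l lam : MvPolynomial (Fin 2) ℝ) : Prop :=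
  IsMaximalLine n X lam ∧ ∃ lam', IsMaximalLine n X lam' ∧ ¬SameLine lam lam' ∧
    ∃ A ∈ X, OnLine lam A ∧ OnLine lam' A ∧ OnLine l A

/-- The `l`-lowering `X̂(l)` of `X`. -/
noncomputable def Lowering (n : ℕ) (X : Finset (ℝ × ℝ)) (l : MvPolynomial (Fin 2) ℝ) :
    Finset (ℝ × ℝ) :=
  X.filter (fun A => ¬ ∃ lam, (IsDisjointMax n X l lam ∨ IsAdjointMax n X l lam) ∧ OnLine lam A)

/-- A node `A` is a `1_m`-node of `X` w.r.t. the maximal-line representatives `L`: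
it lies on exactly one maximal line. -/
def Is1mNode (L : Finset (MvPolynomial (Fin 2) ℝ)) (A : ℝ × ℝ) : Prop :=
  (L.filter (fun l => OnLine l A)).card = 1

/-- `k` lines in general position: no two parallel (any two meet in exactly one point),
no three concurrent. -/
def InGenPos (k : ℕ) (f : Fin k → MvPolynomial (Fin 2) ℝ) : Prop :=
  (∀ i, IsLinearPoly (f i)) ∧
  (∀ i j, i ≠ j → ∃! P : ℝ × ℝ, OnLine (f i) P ∧ OnLine (f j) P) ∧
  (∀ i j m, i ≠ j → j ≠ m → i ≠ m →
    ¬ ∃ P : ℝ × ℝ, OnLine (f i) P ∧ OnLine (f j) P ∧ OnLine (f m) P)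

/-- `X` is a Chung-Yao lattice of degree `m`. -/
def IsChungYao (m : ℕ) (X : Finset (ℝ × ℝ)) : Prop :=
  ∃ f : Fin (m + 2) → MvPolynomial (Fin 2) ℝ, InGenPos (m + 2) f ∧
    ∀ P : ℝ × ℝ, P ∈ X ↔ ∃ i j, i ≠ j ∧ OnLine (f i) P ∧ OnLine (f j) P

open MvPolynomial Finset

namespace MvPolynomial

variable {σ R K : Type*}

theorem prime_of_totalDegree_eq_one [Field K] {l : MvPolynomial σ K} (hl : l.totalDegree = 1) :
    Prime l := by
  refine UniqueFactorizationMonoid.irreducible_iff_prime.mp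
    (irreducible_of_totalDegree_eq_one hl fun a ha => isUnit_iff_ne_zero.mpr ?_)
  rintro rfl
  have : l = 0 := by ext d; simpa using ha d
  simp [this] at hl

theorem dvd_sub_aeval [CommRing R] {l : MvPolynomial σ R} {g : σ → MvPolynomial σ R}
    (hg : ∀ i, l ∣ X i - g i) (p : MvPolynomial σ R) : l ∣ p - aeval g p := by
  let π := Ideal.Quotient.mkₐ R (Ideal.span {l})
  have h : π.comp (aeval g) = π := by
    ext i
    simpa [π, Ideal.Quotient.eq, Ideal.mem_span_singleton] using dvd_sub_comm.mp (hg i)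
  rw [← Ideal.mem_span_singleton, ← Ideal.Quotient.eq]
  exact (DFunLike.congr_fun h p).symm

theorem natDegree_aeval_le_totalDegree [CommSemiring R] {g : σ → Polynomial R}
    (hg : ∀ i, (g i).natDegree ≤ 1) (p : MvPolynomial σ R) :
    (aeval g p).natDegree ≤ p.totalDegree := by
  rw [aeval_def, eval₂_eq]
  refine Polynomial.natDegree_sum_le_of_forall_le _ _ fun d hd => ?_
  refine (Polynomial.natDegree_C_mul_le _ _).trans <| (Polynomial.natDegree_prod_le _ _).trans ?_
  refine le_trans (sum_le_sum fun i _ => ?_) (le_totalDegree hd)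
  exact Polynomial.natDegree_pow_le.trans (by simpa using Nat.mul_le_mul_left (d i) (hg i))

/-- Substituting `X i ↦ (g i)(τ)` is the identity modulo `l`, so `l ∣ p - (aeval g p)(τ)`, and the
univariate `aeval g p` vanishes, having more roots than its degree. -/
theorem dvd_of_card_lt_of_eval_curve_eq_zero [Field K] {l p : MvPolynomial σ K}
    {g : σ → Polynomial K} (hg : ∀ i, (g i).natDegree ≤ 1) {τ : MvPolynomial σ K}
    (hgl : ∀ i, l ∣ X i - Polynomial.aeval τ (g i)) (S : Finset (σ → K)) (ρ : (σ → K) → K)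
    (hρ : ∀ v ∈ S, (fun i => (g i).eval (ρ v)) = v) (hS : p.totalDegree < #S)
    (hp : ∀ v ∈ S, eval v p = 0) : l ∣ p := by
  have hρS : #(S.image ρ) = #S :=
    card_image_of_injOn fun v hv w hw h => by rw [← hρ v hv, ← hρ w hw, h]
  have h0 : aeval g p = 0 := by
    refine Polynomial.eq_zero_of_natDegree_lt_card_of_eval_eq_zero' _ (S.image ρ) ?_
      ((natDegree_aeval_le_totalDegree hg p).trans_lt (hρS ▸ hS))
    simp only [mem_image, forall_exists_index, and_imp, forall_apply_eq_imp_iff₂]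
    intro v hv
    rw [← Polynomial.coe_aeval_eq_eval, comp_aeval_apply]
    simpa [hρ v hv] using hp v hv
  have h := dvd_sub_aeval hgl p
  rwa [← comp_aeval_apply, h0, map_zero, sub_zero] at h

theorem eq_linear_of_totalDegree_le_one [CommSemiring R] {l : MvPolynomial (Fin 2) R}
    (h : l.totalDegree ≤ 1) :
    l = C (coeff (Finsupp.single 0 1) l) * X 0 + C (coeff (Finsupp.single 1 1) l) * X 1 +
      C (coeff 0 l) := by
  ext d
  simp only [coeff_add, coeff_C_mul, coeff_X, coeff_C]
  by_cases hd : d ∈ l.support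
  · have hdeg := (le_totalDegree hd).trans h
    rw [Finsupp.sum_fintype _ _ (by simp), Fin.sum_univ_two] at hdeg
    have key : d = Finsupp.single 0 1 ∨ d = Finsupp.single 1 1 ∨ d = 0 := by
      rcases (by omega : d 0 = 1 ∧ d 1 = 0 ∨ d 0 = 0 ∧ d 1 = 1 ∨ d 0 = 0 ∧ d 1 = 0)
        with h | h | h
      · exact .inl (by ext i; fin_cases i <;> simp [h])
      · exact .inr (.inl (by ext i; fin_cases i <;> simp [h]))
      · exact .inr (.inr (by ext i; fin_cases i <;> simp [h]))
    rcases key with rfl | rfl | rfl <;>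
      simp [Finsupp.single_eq_single_iff, (Finsupp.single_ne_zero.mpr one_ne_zero).symm]
  · rw [notMem_support_iff] at hd
    rw [hd]
    split_ifs <;> subst_vars <;> simp_all

theorem dvd_of_card_lt_of_eval_eq_zero_of_eq_line [Field K] {l p : MvPolynomial (Fin 2) K}
    {i j : Fin 2} (hij : i ≠ j) {a b c : K} (ha : a ≠ 0) (hl : l = C a * X i + C b * X j + C c)
    (S : Finset (Fin 2 → K)) (hS : p.totalDegree < #S) (hSl : ∀ v ∈ S, eval v l = 0)
    (hSp : ∀ v ∈ S, eval v p = 0) : l ∣ p := by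
  have hj : ∀ k, k ≠ i → k = j := by omega
  refine dvd_of_card_lt_of_eval_curve_eq_zero (τ := X j) (ρ := fun v => v j)
    (g := fun k => if k = i then Polynomial.C (-b / a) * Polynomial.X + Polynomial.C (-c / a)
      else Polynomial.X) (fun k => ?_) (fun k => ?_) S (fun v hv => ?_) hS hSp
  · split_ifs
    exacts [Polynomial.natDegree_linear_le, Polynomial.natDegree_X_le]
  · split_ifs with hki
    · subst hki
      refine ⟨C a⁻¹, ?_⟩
      have e : (C a : MvPolynomial (Fin 2) K) * C a⁻¹ = 1 := by
        rw [← C_mul, mul_inv_cancel₀ ha, C_1]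
      simp only [hl, map_add, map_mul, Polynomial.aeval_C, Polynomial.aeval_X, algebraMap_eq,
        div_eq_mul_inv, map_neg]
      linear_combination (-X k : MvPolynomial (Fin 2) K) * e
    · simp [hj k hki]
  · have hv' : a * v i + b * v j + c = 0 := by simpa [hl] using hSl v hv
    funext k
    split_ifs with hki
    · subst hki
      simp only [Polynomial.eval_add, Polynomial.eval_mul, Polynomial.eval_C, Polynomial.eval_X]
      field_simp
      linear_combination -hv'
    · simp [hj k hki]

end MvPolynomial

theorem IsLinearPoly.ne_zero {l : MvPolynomial (Fin 2) ℝ} (hl : IsLinearPoly l) : l ≠ 0 := by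
  rintro rfl
  simp [IsLinearPoly] at hl

theorem IsLinearPoly.dvd_of_card_lt {l d : MvPolynomial (Fin 2) ℝ} (hl : IsLinearPoly l)
    (S : Finset (ℝ × ℝ)) (hS : d.totalDegree < #S) (hSl : ∀ P ∈ S, OnLine l P)
    (hSd : ∀ P ∈ S, evalPt d P = 0) : l ∣ d := by
  have hrep := eq_linear_of_totalDegree_le_one hl.le
  let S' := S.image fun P => ![P.1, P.2]
  have hS' : d.totalDegree < #S' := by
    rwa [card_image_of_injective _ fun P Q h => Prod.ext (congrFun h 0) (congrFun h 1)]
  have hS'l : ∀ v ∈ S', eval v l = 0 := by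
    simp only [S', mem_image]
    rintro v ⟨P, hP, rfl⟩
    exact hSl P hP
  have hS'd : ∀ v ∈ S', eval v d = 0 := by
    simp only [S', mem_image]
    rintro v ⟨P, hP, rfl⟩
    exact hSd P hP
  by_cases ha : coeff (Finsupp.single 0 1) l = 0
  · have hb : coeff (Finsupp.single 1 1) l ≠ 0 := by
      intro hb
      rw [ha, hb] at hrep
      rw [hrep] at hl
      simp [IsLinearPoly] at hl
    exact dvd_of_card_lt_of_eval_eq_zero_of_eq_line (i := 1) (j := 0) (c := coeff 0 l)
      (by decide) hb (hrep.trans (by ring)) S' hS' hS'l hS'd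
  · exact dvd_of_card_lt_of_eval_eq_zero_of_eq_line (by decide) ha hrep S' hS' hS'l hS'd

theorem IsLinearPoly.sameLine_of_dvd {l l' : MvPolynomial (Fin 2) ℝ} (hl : IsLinearPoly l)
    (hl' : IsLinearPoly l') (h : l ∣ l') : SameLine l' l := by
  obtain ⟨u, rfl⟩ := h
  have hu : u ≠ 0 := right_ne_zero_of_mul hl'.ne_zero
  have hdeg : u.totalDegree = 0 := by
    have := totalDegree_mul_of_isDomain hl.ne_zero hu
    rw [hl', hl] at this
    omega
  have hC := totalDegree_eq_zero_iff_eq_C.mp hdeg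
  have hγ : coeff 0 u ≠ 0 := fun h0 => hu (by rw [hC, h0, C_0])
  intro P
  rw [hC]
  simp [OnLine, evalPt, hγ]

structure IsGenPrincipalLattice (n : ℕ) (X : Finset (ℝ × ℝ))
    (ell : Fin 3 → Fin (n + 1) → MvPolynomial (Fin 2) ℝ)
    (x : Fin (n + 1) → Fin (n + 1) → Fin (n + 1) → ℝ × ℝ) : Prop where
  isLinearPoly : ∀ r i, IsLinearPoly (ell r i)
  concurrent_iff : ∀ i j k : Fin (n + 1),
    (∃ P ∈ X, OnLine (ell 0 i) P ∧ OnLine (ell 1 j) P ∧ OnLine (ell 2 k) P) ↔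
      (i : ℕ) + j + k = n
  node_spec : ∀ i j k : Fin (n + 1), (i : ℕ) + j + k = n →
    x i j k ∈ X ∧ OnLine (ell 0 i) (x i j k) ∧ OnLine (ell 1 j) (x i j k) ∧
      OnLine (ell 2 k) (x i j k)
  exists_eq_node : ∀ P ∈ X, ∃ i j k : Fin (n + 1), (i : ℕ) + j + k = n ∧ P = x i j k

noncomputable def fundamentalProd {n : ℕ} (ell : Fin 3 → Fin (n + 1) → MvPolynomial (Fin 2) ℝ)
    (i j k : Fin (n + 1)) : MvPolynomial (Fin 2) ℝ :=
  ∏ r : Fin 3, ∏ t ∈ Iio (![i, j, k] r), ell r t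

namespace IsGenPrincipalLattice

variable {n : ℕ} {X : Finset (ℝ × ℝ)} {ell : Fin 3 → Fin (n + 1) → MvPolynomial (Fin 2) ℝ}
  {x : Fin (n + 1) → Fin (n + 1) → Fin (n + 1) → ℝ × ℝ}

theorem rotate (hX : IsGenPrincipalLattice n X ell x) :
    IsGenPrincipalLattice n X (fun r => ell (r + 1)) (fun i j k => x k i j) where
  isLinearPoly r := hX.isLinearPoly (r + 1)
  concurrent_iff i j k := by
    rw [← (by omega : (k : ℕ) + i + j = n ↔ (i : ℕ) + j + k = n), ← hX.concurrent_iff]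
    exact exists_congr fun P => and_congr_right fun _ => by tauto
  node_spec i j k h := by
    obtain ⟨hP, h0, h1, h2⟩ := hX.node_spec k i j (by omega)
    exact ⟨hP, h1, h2, h0⟩
  exists_eq_node P hP := by
    obtain ⟨i, j, k, h, rfl⟩ := hX.exists_eq_node P hP
    exact ⟨j, k, i, by omega, rfl⟩

variable (hX : IsGenPrincipalLattice n X ell x)
include hX

theorem onLine_iff {i j k : Fin (n + 1)} (h : (i : ℕ) + j + k = n) (r : Fin 3) (t : Fin (n + 1)) :
    OnLine (ell r t) (x i j k) ↔ t = ![i, j, k] r := by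
  obtain ⟨hP, h0, h1, h2⟩ := hX.node_spec i j k h
  fin_cases r
  · show _ ↔ t = i
    refine ⟨fun ht => Fin.ext ?_, fun ht => ht ▸ h0⟩
    have := (hX.concurrent_iff t j k).mp ⟨_, hP, ht, h1, h2⟩
    omega
  · show _ ↔ t = j
    refine ⟨fun ht => Fin.ext ?_, fun ht => ht ▸ h1⟩
    have := (hX.concurrent_iff i t k).mp ⟨_, hP, h0, ht, h2⟩
    omega
  · show _ ↔ t = k
    refine ⟨fun ht => Fin.ext ?_, fun ht => ht ▸ h2⟩
    have := (hX.concurrent_iff i j t).mp ⟨_, hP, h0, h1, ht⟩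
    omega

theorem eq_of_onLine_of_onLine {A : ℝ × ℝ} (hA : A ∈ X) {r : Fin 3} {t t' : Fin (n + 1)}
    (ht : OnLine (ell r t) A) (ht' : OnLine (ell r t') A) : t = t' := by
  obtain ⟨i, j, k, h, rfl⟩ := hX.exists_eq_node A hA
  rw [(hX.onLine_iff h r t).mp ht, (hX.onLine_iff h r t').mp ht']

theorem card_filter_onLine_zero (t : Fin (n + 1)) :
    #(X.filter (OnLine (ell 0 t))) = n + 1 - t := by
  rw [← Fintype.card_fin (n + 1 - t), ← card_univ]
  symm
  refine card_bij (fun j _ => x t ⟨j, by omega⟩ ⟨n - t - j, by omega⟩) (fun j _ => ?_)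
    (fun j _ j' _ h => ?_) (fun A hA => ?_)
  · have hsum : (t : ℕ) + j + (n - t - j) = n := by omega
    exact mem_filter.mpr ⟨(hX.node_spec _ _ _ hsum).1, (hX.node_spec _ _ _ hsum).2.1⟩
  · have hon := (hX.node_spec t ⟨j', by omega⟩ ⟨n - t - j', by omega⟩ (by dsimp only; omega)).2.2.1
    rw [← h, hX.onLine_iff (by dsimp only; omega)] at hon
    exact Fin.ext (congrArg Fin.val hon).symm
  · obtain ⟨hAX, hA⟩ := mem_filter.mp hA
    obtain ⟨i, j, k, h, rfl⟩ := hX.exists_eq_node _ hAX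
    obtain rfl : t = i := (hX.onLine_iff h 0 t).mp hA
    refine ⟨⟨j, by omega⟩, mem_univ _, ?_⟩
    congr
    dsimp only
    omega

theorem eq_zero_of_totalDegree_lt_of_evalPt_eq_zero {m : ℕ} (hm : m ≤ n + 1)
    {p : MvPolynomial (Fin 2) ℝ} (hp : p.totalDegree < m)
    (hvan : ∀ i j k : Fin (n + 1), (i : ℕ) + j + k = n → (j : ℕ) + k < m →
      evalPt p (x i j k) = 0) : p = 0 := by
  induction m generalizing p with
  | zero => omega
  | succ m ih =>
    -- the nodes with `j + k = m` are those on `ℓ_{n-m}^0`; divide `p` by that line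
    obtain ⟨t, ht⟩ : ∃ t : Fin (n + 1), (t : ℕ) = n - m := ⟨⟨n - m, by omega⟩, rfl⟩
    have hline : ∀ A ∈ X.filter (OnLine (ell 0 t)), evalPt p A = 0 := by
      intro A hA
      obtain ⟨hAX, hA⟩ := mem_filter.mp hA
      obtain ⟨i, j, k, h, rfl⟩ := hX.exists_eq_node A hAX
      have : (t : ℕ) = i := congrArg Fin.val ((hX.onLine_iff h 0 t).mp hA)
      exact hvan i j k h (by omega)
    obtain ⟨q, rfl⟩ := (hX.isLinearPoly 0 t).dvd_of_card_lt _
      (by rw [hX.card_filter_onLine_zero]; omega) (fun A hA => (mem_filter.mp hA).2) hline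
    suffices q = 0 by rw [this, mul_zero]
    by_contra hq
    have hdeg := totalDegree_mul_of_isDomain (hX.isLinearPoly 0 t).ne_zero hq
    rw [hX.isLinearPoly 0 t] at hdeg
    refine hq (ih (by omega) (by omega) fun i j k h hjk => ?_)
    have hp := hvan i j k h (by omega)
    rw [evalPt, map_mul] at hp
    refine (mul_eq_zero.mp hp).resolve_left fun hon => ?_
    have : (t : ℕ) = i := congrArg Fin.val ((hX.onLine_iff h 0 t).mp hon)
    omega

theorem eq_zero_of_evalPt_eq_zero {p : MvPolynomial (Fin 2) ℝ} (hp : p.totalDegree ≤ n)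
    (hvan : ∀ A ∈ X, evalPt p A = 0) : p = 0 :=
  hX.eq_zero_of_totalDegree_lt_of_evalPt_eq_zero le_rfl (by omega)
    fun i j k h _ => hvan _ (hX.node_spec i j k h).1

theorem isFundamental_unique {A : ℝ × ℝ} {q₁ q₂ : MvPolynomial (Fin 2) ℝ}
    (h₁ : IsFundamental n X A q₁) (h₂ : IsFundamental n X A q₂) : q₁ = q₂ := by
  refine sub_eq_zero.mp (hX.eq_zero_of_evalPt_eq_zero
    ((totalDegree_sub _ _).trans (max_le h₁.1 h₂.1)) fun B hB => ?_)
  rw [show evalPt (q₁ - q₂) B = evalPt q₁ B - evalPt q₂ B from map_sub _ _ _]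
  by_cases hBA : B = A
  · rw [hBA, h₁.2.1, h₂.2.1, sub_self]
  · rw [h₁.2.2 B hB hBA, h₂.2.2 B hB hBA, sub_self]

theorem totalDegree_fundamentalProd_le {i j k : Fin (n + 1)} (h : (i : ℕ) + j + k = n) :
    (fundamentalProd ell i j k).totalDegree ≤ n := by
  have hdeg : ∀ r t, (ell r t).totalDegree = 1 := hX.isLinearPoly
  calc _ ≤ ∑ r : Fin 3, ∑ t ∈ Iio (![i, j, k] r), (ell r t).totalDegree :=
        (totalDegree_finsetProd _ _).trans (sum_le_sum fun r _ => totalDegree_finsetProd _ _)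
    _ = n := by simp [hdeg, Fin.sum_univ_three, h]

theorem evalPt_fundamentalProd_self_ne_zero {i j k : Fin (n + 1)} (h : (i : ℕ) + j + k = n) :
    evalPt (fundamentalProd ell i j k) (x i j k) ≠ 0 := by
  simp only [fundamentalProd, evalPt, map_prod]
  refine prod_ne_zero_iff.mpr fun r _ => prod_ne_zero_iff.mpr fun t ht hon => ?_
  exact (mem_Iio.mp ht).ne ((hX.onLine_iff h r t).mp hon)

theorem evalPt_fundamentalProd_eq_zero {i j k i' j' k' : Fin (n + 1)} (h : (i : ℕ) + j + k = n)
    (h' : (i' : ℕ) + j' + k' = n) (hne : x i' j' k' ≠ x i j k) :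
    evalPt (fundamentalProd ell i j k) (x i' j' k') = 0 := by
  obtain ⟨r, hr⟩ : ∃ r, ![i', j', k'] r < ![i, j, k] r := by
    by_contra! hle
    have h0 : (i : ℕ) ≤ i' := hle 0
    have h1 : (j : ℕ) ≤ j' := hle 1
    have h2 : (k : ℕ) ≤ k' := hle 2
    exact hne (by congr <;> apply Fin.ext <;> omega)
  simp only [fundamentalProd, evalPt, map_prod]
  exact prod_eq_zero (mem_univ r) (prod_eq_zero (mem_Iio.mpr hr) ((hX.onLine_iff h' r _).mpr rfl))

theorem isFundamental_fundamentalProd {i j k : Fin (n + 1)} (h : (i : ℕ) + j + k = n) :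
    IsFundamental n X (x i j k)
      (C (evalPt (fundamentalProd ell i j k) (x i j k))⁻¹ * fundamentalProd ell i j k) := by
  have hC : ∀ (a : ℝ) (p : MvPolynomial (Fin 2) ℝ) P, evalPt (C a * p) P = a * evalPt p P :=
    fun a p P => by simp [evalPt]
  refine ⟨?_, ?_, fun B hB hne => ?_⟩
  · refine (totalDegree_mul _ _).trans ?_
    rw [totalDegree_C, zero_add]
    exact hX.totalDegree_fundamentalProd_le h
  · rw [hC, inv_mul_cancel₀ (hX.evalPt_fundamentalProd_self_ne_zero h)]
  · obtain ⟨i', j', k', h', rfl⟩ := hX.exists_eq_node B hB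
    rw [hC, hX.evalPt_fundamentalProd_eq_zero h h' hne, mul_zero]

theorem uses_iff
    (hdist : ∀ r i r' i', (r, i) ≠ (r', i') → ¬ SameLine (ell r i) (ell r' i'))
    {i j k : Fin (n + 1)} (h : (i : ℕ) + j + k = n) (r : Fin 3) (s : Fin (n + 1)) :
    Uses n X (x i j k) (ell r s) ↔ s < ![i, j, k] r := by
  have hfund := hX.isFundamental_fundamentalProd h
  constructor
  · rintro ⟨q, hq, hdvd⟩
    rw [hX.isFundamental_unique hq hfund, ((inv_ne_zero
      (hX.evalPt_fundamentalProd_self_ne_zero h)).isUnit.map C).dvd_mul_left] at hdvd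
    have hprime := prime_of_totalDegree_eq_one (hX.isLinearPoly r s)
    obtain ⟨r', -, t, ht, hdvd⟩ : ∃ r' ∈ univ, ∃ t ∈ Iio (![i, j, k] r'), ell r s ∣ ell r' t := by
      simpa only [fundamentalProd, hprime.dvd_finsetProd_iff] using hdvd
    obtain ⟨rfl, rfl⟩ : r' = r ∧ t = s := by
      by_contra hne
      exact hdist r' t r s (fun heq => hne (Prod.mk.inj heq))
        ((hX.isLinearPoly r s).sameLine_of_dvd (hX.isLinearPoly r' t) hdvd)
    exact mem_Iio.mp ht
  · intro hs
    refine ⟨_, hfund, dvd_mul_of_dvd_right ?_ _⟩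
    exact (dvd_prod_of_mem _ (mem_Iio.mpr hs)).trans (dvd_prod_of_mem _ (mem_univ r))

theorem usedSet_eq
    (hdist : ∀ r i r' i', (r, i) ≠ (r', i') → ¬ SameLine (ell r i) (ell r' i'))
    (r : Fin 3) (s : Fin (n + 1)) :
    UsedSet n X (ell r s) =
      X.filter (fun A => ∀ t : Fin (n + 1), (t : ℕ) ≤ s → ¬ OnLine (ell r t) A) := by
  ext A
  simp only [UsedSet, mem_filter, and_congr_right_iff]
  intro hA
  obtain ⟨i, j, k, h, rfl⟩ := hX.exists_eq_node A hA
  simp only [hX.uses_iff hdist h, hX.onLine_iff h]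
  exact ⟨fun hs t ht heq => absurd hs (heq ▸ not_lt.mpr ht), fun H => by
    by_contra! hle
    exact H _ hle rfl⟩

theorem card_filter_forall_not_onLine_zero {s k : ℕ} (hk : 1 ≤ k) (hs : s + k = n + 1) :
    #(X.filter fun A => ∀ t : Fin (n + 1), (t : ℕ) ≤ s → ¬ OnLine (ell 0 t) A) =
      k * (k - 1) / 2 := by
  have hunion : (X.filter fun A => ∀ t : Fin (n + 1), (t : ℕ) ≤ s → ¬ OnLine (ell 0 t) A) =
      (univ : Finset (Fin (k - 1))).biUnion
        fun u => X.filter (OnLine (ell 0 ⟨n - u, by omega⟩)) := by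
    ext A
    simp only [mem_filter, mem_biUnion, mem_univ, true_and]
    constructor
    · rintro ⟨hA, H⟩
      obtain ⟨i, j, k', h, rfl⟩ := hX.exists_eq_node A hA
      have hi : s < i := by
        by_contra! hle
        exact H i hle ((hX.onLine_iff h 0 i).mpr rfl)
      refine ⟨⟨n - i, by omega⟩, hA, (hX.onLine_iff h 0 _).mpr (Fin.ext ?_)⟩
      show n - (n - i) = i
      omega
    · rintro ⟨u, hA, hon⟩
      refine ⟨hA, fun t ht hon' => ?_⟩
      have : n - u = t := congrArg Fin.val (hX.eq_of_onLine_of_onLine hA hon hon')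
      omega
  rw [hunion, card_biUnion fun u _ u' _ huu' => disjoint_filter.mpr fun A hA hon hon' => huu' ?_]
  · simp_rw [hX.card_filter_onLine_zero]
    rw [Fin.sum_univ_eq_sum_range (fun u => n + 1 - (n - u)), ← sum_range_id,
      ← Nat.sub_add_cancel hk, sum_range_succ', add_zero]
    exact sum_congr rfl fun u hu => by rw [mem_range] at hu; omega
  · have : n - u = n - u' := congrArg Fin.val (hX.eq_of_onLine_of_onLine hA hon hon')
    exact Fin.ext (by omega)

theorem card_filter_forall_not_onLine {s k : ℕ} (hk : 1 ≤ k) (hs : s + k = n + 1) (r : Fin 3) :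
    #(X.filter fun A => ∀ t : Fin (n + 1), (t : ℕ) ≤ s → ¬ OnLine (ell r t) A) =
      k * (k - 1) / 2 := by
  fin_cases r
  exacts [hX.card_filter_forall_not_onLine_zero hk hs,
    hX.rotate.card_filter_forall_not_onLine_zero hk hs,
    hX.rotate.rotate.card_filter_forall_not_onLine_zero hk hs]

end IsGenPrincipalLattice

/-- In a generalized principal lattice of degree `n`, if
`ℓ = ℓ_{n-k+1}^r` is a `k`-node line (`k ≥ 2`), then
`Xˡ = X \ (ℓ_0^r ∪ ⋯ ∪ ℓ_{n-k+1}^r)`, and exactly `k(k-1)/2` nodes use `ℓ`. -/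
theorem GPL_used_set
    (n : ℕ) (X : Finset (ℝ × ℝ))
    (ell : Fin 3 → Fin (n + 1) → MvPolynomial (Fin 2) ℝ)
    (hlin : ∀ r i, IsLinearPoly (ell r i))
    (hdist : ∀ r i r' i', (r, i) ≠ (r', i') → ¬ SameLine (ell r i) (ell r' i'))
    (hiff : ∀ i j k : Fin (n + 1),
      (∃ P ∈ X, OnLine (ell 0 i) P ∧ OnLine (ell 1 j) P ∧ OnLine (ell 2 k) P) ↔
        (i : ℕ) + j + k = n)
    (x : Fin (n + 1) → Fin (n + 1) → Fin (n + 1) → ℝ × ℝ)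
    (hx : ∀ i j k : Fin (n + 1), (i : ℕ) + j + k = n →
      x i j k ∈ X ∧ OnLine (ell 0 i) (x i j k) ∧ OnLine (ell 1 j) (x i j k) ∧
        OnLine (ell 2 k) (x i j k))
    (hXeq : ∀ P ∈ X, ∃ i j k : Fin (n + 1), (i : ℕ) + j + k = n ∧ P = x i j k)
    (r : Fin 3) (k s : ℕ) (hk2 : 2 ≤ k) (hs : s + k = n + 1) :
    UsedSet n X (ell r ⟨s, by omega⟩) =
      X.filter (fun A => ∀ t : Fin (n + 1), (t : ℕ) ≤ s → ¬ OnLine (ell r t) A) ∧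
    (UsedSet n X (ell r ⟨s, by omega⟩)).card = k * (k - 1) / 2 := by
  have hX : IsGenPrincipalLattice n X ell x := ⟨hlin, hiff, hx, hXeq⟩
  have hused := hX.usedSet_eq hdist r ⟨s, by omega⟩
  exact ⟨hused, hused ▸ hX.card_filter_forall_not_onLine (by omega) hs r⟩
end

section
/- In a generalized principal lattice X of degree n, for any used line ℓ = ℓ_i^r with 1 ≤ i ≤ n such that ℓ contains at least 2 and at most n nodes of X (so ℓ is not a maximal line), the maximal line ℓ_0^r does not intersect ℓ at a node of X, while the other two maximal lines ℓ_0^{r'} (r' ≠ r) intersect ℓ at two distinct nodes of X; consequently the ℓ-lowering satisfies X̂(ℓ) = X \ ℓ_0^r. -/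
attribute [local instance] Classical.propDecidable

open MvPolynomial Finsupp in
lemma linear_repr (l : MvPolynomial (Fin 2) ℝ) (h : l.totalDegree ≤ 1) :
    l = MvPolynomial.C (l.coeff 0) +
        MvPolynomial.monomial (Finsupp.single 0 1) (l.coeff (Finsupp.single 0 1)) +
        MvPolynomial.monomial (Finsupp.single 1 1) (l.coeff (Finsupp.single 1 1)) := by
  apply MvPolynomial.ext
  intro m
  simp only [coeff_add, coeff_C, coeff_monomial]
  by_cases h0 : m = 0
  · subst h0
    have h1 : (Finsupp.single (0 : Fin 2) 1 : Fin 2 →₀ ℕ) ≠ 0 := by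
      simp [Finsupp.single_eq_zero]
    have h2 : (Finsupp.single (1 : Fin 2) 1 : Fin 2 →₀ ℕ) ≠ 0 := by
      simp [Finsupp.single_eq_zero]
    simp [h1, h2, eq_comm]
  · by_cases h1 : m = Finsupp.single 0 1
    · subst h1
      have hne : (Finsupp.single (1:Fin 2) 1 : Fin 2 →₀ ℕ) ≠ Finsupp.single (0:Fin 2) 1 := by
        intro hc
        have := DFunLike.congr_fun hc (0 : Fin 2)
        simp [Finsupp.single_apply] at this
      simp [h0, eq_comm, Finsupp.single_eq_zero, hne, hne.symm]
    · by_cases h2 : m = Finsupp.single 1 1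
      · subst h2
        simp_all [eq_comm]
      · -- coeff m l = 0
        have : l.coeff m = 0 := by
          by_contra hc
          have hm : m ∈ l.support := by simpa [MvPolynomial.mem_support_iff] using hc
          have hd : m.sum (fun _ e => e) ≤ 1 := le_trans (MvPolynomial.le_totalDegree hm) h
          have hsum : m 0 + m 1 ≤ 1 := by
            have := Finsupp.sum_fintype m (fun _ e => e) (by simp)
            rw [this] at hd
            simpa [Fin.sum_univ_two] using hd
          -- classify m
          have : m = 0 ∨ m = Finsupp.single 0 1 ∨ m = Finsupp.single 1 1 := by
            rcases Nat.le_one_iff_eq_zero_or_eq_one.mp (le_trans (Nat.le_add_right _ _) hsum) with ha | ha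
            · rcases Nat.le_one_iff_eq_zero_or_eq_one.mp (le_trans (Nat.le_add_left _ _) hsum) with hb | hb
              · left; ext k; fin_cases k <;> simp [ha, hb]
              · right; right; ext k; fin_cases k <;> simp [ha, hb, Finsupp.single_apply]
            · right; left; ext k
              have hb : m 1 = 0 := by omega
              fin_cases k <;> simp [ha, hb, Finsupp.single_apply]
          tauto
        simp [this, h0, h1, h2, eq_comm]

lemma eval_linear (l : MvPolynomial (Fin 2) ℝ) (h : l.totalDegree ≤ 1) (A : ℝ × ℝ) :
    evalPt l A = l.coeff (Finsupp.single 0 1) * A.1 + l.coeff (Finsupp.single 1 1) * A.2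
      + l.coeff 0 := by
  conv_lhs => rw [evalPt, linear_repr l h]
  simp [MvPolynomial.eval_monomial, Finsupp.prod_single_index]
  ring

lemma linear_nondegen (l : MvPolynomial (Fin 2) ℝ) (h : IsLinearPoly l) :
    ¬ (l.coeff (Finsupp.single 0 1) = 0 ∧ l.coeff (Finsupp.single 1 1) = 0) := by
  rintro ⟨h0, h1⟩
  have := linear_repr l h.le
  rw [h0, h1] at this
  simp at this
  rw [IsLinearPoly, this] at h
  simp [MvPolynomial.totalDegree_C] at h

lemma dir_aux {a₁ b₁ a₂ b₂ u v : ℝ} (hnd : ¬(a₁ = 0 ∧ b₁ = 0))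
    (hcross : a₁ * b₂ = a₂ * b₁) (h : a₁ * u + b₁ * v = 0) : a₂ * u + b₂ * v = 0 := by
  by_cases ha : a₁ = 0
  · have hb : b₁ ≠ 0 := fun hb => hnd ⟨ha, hb⟩
    have hv : v = 0 := by
      have : b₁ * v = 0 := by rw [ha] at h; linarith
      exact (mul_eq_zero.mp this).resolve_left hb
    have ha2 : a₂ = 0 := by
      have : a₂ * b₁ = 0 := by rw [← hcross, ha]; ring
      exact (mul_eq_zero.mp this).resolve_right hb
    rw [hv, ha2]; ring
  · have : a₁ * (a₂ * u + b₂ * v) = a₂ * (a₁ * u + b₁ * v) := by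
      linear_combination v * hcross
    rw [h, mul_zero] at this
    exact (mul_eq_zero.mp this).resolve_left ha

lemma two_points_same_line {l₁ l₂ : MvPolynomial (Fin 2) ℝ}
    (h₁ : IsLinearPoly l₁) (h₂ : IsLinearPoly l₂) {P Q : ℝ × ℝ} (hPQ : P ≠ Q)
    (hP1 : OnLine l₁ P) (hQ1 : OnLine l₁ Q) (hP2 : OnLine l₂ P) (hQ2 : OnLine l₂ Q) :
    SameLine l₁ l₂ := by
  set a₁ := l₁.coeff (Finsupp.single 0 1); set b₁ := l₁.coeff (Finsupp.single 1 1)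
  set c₁ := l₁.coeff 0
  set a₂ := l₂.coeff (Finsupp.single 0 1); set b₂ := l₂.coeff (Finsupp.single 1 1)
  set c₂ := l₂.coeff 0
  have e₁ := fun A => eval_linear l₁ h₁.le A
  have e₂ := fun A => eval_linear l₂ h₂.le A
  have hn₁ := linear_nondegen l₁ h₁
  have hn₂ := linear_nondegen l₂ h₂
  rw [OnLine, e₁ P] at hP1; rw [OnLine, e₁ Q] at hQ1
  rw [OnLine, e₂ P] at hP2; rw [OnLine, e₂ Q] at hQ2
  have hd1 : a₁ * (Q.1 - P.1) + b₁ * (Q.2 - P.2) = 0 := by linarith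
  have hd2 : a₂ * (Q.1 - P.1) + b₂ * (Q.2 - P.2) = 0 := by linarith
  have hdne : ¬(Q.1 - P.1 = 0 ∧ Q.2 - P.2 = 0) := by
    rintro ⟨hu, hv⟩
    exact hPQ (Prod.ext (by linarith) (by linarith))
  have hcross : a₁ * b₂ = a₂ * b₁ := by
    by_cases hu : Q.1 - P.1 = 0
    · have hv : Q.2 - P.2 ≠ 0 := fun hv => hdne ⟨hu, hv⟩
      have hb1 : b₁ = 0 := by
        have : b₁ * (Q.2 - P.2) = 0 := by rw [hu] at hd1; linarith
        exact (mul_eq_zero.mp this).resolve_right hv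
      have hb2 : b₂ = 0 := by
        have : b₂ * (Q.2 - P.2) = 0 := by rw [hu] at hd2; linarith
        exact (mul_eq_zero.mp this).resolve_right hv
      rw [hb1, hb2]; ring
    · have h1 : (a₁ * b₂ - a₂ * b₁) * (Q.1 - P.1) = b₂ * (a₁ * (Q.1-P.1) + b₁*(Q.2-P.2)) - b₁ * (a₂ * (Q.1-P.1) + b₂*(Q.2-P.2)) := by ring
      rw [hd1, hd2] at h1
      simp at h1
      rcases h1 with h1 | h1
      · linarith
      · exact absurd h1 hu
  intro R
  rw [OnLine, OnLine, e₁ R, e₂ R]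
  constructor
  · intro hR
    have := dir_aux hn₁ hcross (u := R.1 - P.1) (v := R.2 - P.2) (by linarith)
    linarith
  · intro hR
    have := dir_aux hn₂ (by linear_combination -hcross : a₂ * b₁ = a₁ * b₂) (u := R.1 - P.1) (v := R.2 - P.2) (by linarith)
    linarith


lemma uniq_of (n : ℕ) (X : Finset (ℝ × ℝ))
    (e0 e1 e2 : Fin (n+1) → MvPolynomial (Fin 2) ℝ)
    (hs : ∀ i j k : Fin (n+1),
      (∃ P ∈ X, OnLine (e0 i) P ∧ OnLine (e1 j) P ∧ OnLine (e2 k) P) → (i:ℕ)+j+k = n)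
    (hco : ∀ P ∈ X, ∃ a b c : Fin (n+1), OnLine (e0 a) P ∧ OnLine (e1 b) P ∧ OnLine (e2 c) P) :
    ∀ P ∈ X, ∀ a a' : Fin (n+1), OnLine (e0 a) P → OnLine (e0 a') P → a = a' := by
  intro P hP a a' h h'
  obtain ⟨a0, b0, c0, _, h1, h2⟩ := hco P hP
  have s1 := hs a b0 c0 ⟨P, hP, h, h1, h2⟩
  have s2 := hs a' b0 c0 ⟨P, hP, h', h1, h2⟩
  exact Fin.ext (by omega)

lemma count_of (n : ℕ) (X : Finset (ℝ × ℝ))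
    (e0 e1 : Fin (n+1) → MvPolynomial (Fin 2) ℝ)
    (x : Fin (n+1) → Fin (n+1) → Fin (n+1) → ℝ × ℝ)
    (hx : ∀ a b c : Fin (n+1), (a:ℕ)+b+c = n →
      x a b c ∈ X ∧ OnLine (e0 a) (x a b c) ∧ OnLine (e1 b) (x a b c))
    (hco : ∀ P ∈ X, ∃ a b c : Fin (n+1), (a:ℕ)+b+c = n ∧ P = x a b c ∧
      OnLine (e0 a) P ∧ OnLine (e1 b) P)
    (hu0 : ∀ P ∈ X, ∀ a a' : Fin (n+1), OnLine (e0 a) P → OnLine (e0 a') P → a = a')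
    (hu1 : ∀ P ∈ X, ∀ b b' : Fin (n+1), OnLine (e1 b) P → OnLine (e1 b') P → b = b')
    (j : Fin (n+1)) :
    (X.filter (fun A => OnLine (e0 j) A)).card = n + 1 - j := by
  choose fa fb fc hsum hpt h0 h1 using hco
  have hjn : (j:ℕ) < n + 1 := j.isLt
  apply le_antisymm
  · have := Finset.card_le_card_of_injOn
      (f := fun P => if h : P ∈ X then (fb P h : ℕ) else 0)
      (s := X.filter (fun A => OnLine (e0 j) A)) (t := Finset.range (n + 1 - j)) ?_ ?_
    · simpa using this
    · intro P hP
      obtain ⟨hPX, hPon⟩ := Finset.mem_filter.mp hP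
      have haj : fa P hPX = j := hu0 P hPX _ _ (h0 P hPX) hPon
      have := hsum P hPX
      rw [haj] at this
      simp only [dif_pos hPX, Finset.mem_coe, Finset.mem_range]
      omega
    · intro P hP Q hQ hfb
      obtain ⟨hPX, hPon⟩ := Finset.mem_filter.mp (by exact hP)
      obtain ⟨hQX, hQon⟩ := Finset.mem_filter.mp (by exact hQ)
      simp only [dif_pos hPX, dif_pos hQX] at hfb
      have haP : fa P hPX = j := hu0 P hPX _ _ (h0 P hPX) hPon
      have haQ : fa Q hQX = j := hu0 Q hQX _ _ (h0 Q hQX) hQon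
      have hbPQ : fb P hPX = fb Q hQX := Fin.ext hfb
      have hsP := hsum P hPX; have hsQ := hsum Q hQX
      rw [haP] at hsP; rw [haQ] at hsQ
      have hcPQ : fc P hPX = fc Q hQX := Fin.ext (by omega)
      rw [hpt P hPX, hpt Q hQX, haP, haQ, hbPQ, hcPQ]
  · have := Finset.card_le_card_of_injOn
      (f := fun m => x j ⟨m % (n+1), Nat.mod_lt _ (by omega)⟩
        ⟨(n - j - m) % (n+1), Nat.mod_lt _ (by omega)⟩)
      (s := Finset.range (n + 1 - j)) (t := X.filter (fun A => OnLine (e0 j) A)) ?_ ?_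
    · simpa using this
    · intro m hm
      have hm' : m < n + 1 - j := Finset.mem_range.mp hm
      have e1' : m % (n+1) = m := Nat.mod_eq_of_lt (by omega)
      have e2' : (n - j - m) % (n+1) = n - j - m := Nat.mod_eq_of_lt (by omega)
      have hsum' : (j:ℕ) + (m % (n+1)) + ((n - j - m) % (n+1)) = n := by
        rw [e1', e2']; omega
      obtain ⟨hmem, hon, _⟩ := hx j ⟨m % (n+1), Nat.mod_lt _ (by omega)⟩ ⟨(n - j - m) % (n+1), Nat.mod_lt _ (by omega)⟩ hsum'
      exact Finset.mem_filter.mpr ⟨hmem, hon⟩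
    · intro m1 hm1 m2 hm2 heq
      have hm1' : m1 < n + 1 - j := Finset.mem_range.mp hm1
      have hm2' : m2 < n + 1 - j := Finset.mem_range.mp hm2
      have e11 : m1 % (n+1) = m1 := Nat.mod_eq_of_lt (by omega)
      have e12 : m2 % (n+1) = m2 := Nat.mod_eq_of_lt (by omega)
      have hs1 : (j:ℕ) + (m1 % (n+1)) + ((n - j - m1) % (n+1)) = n := by
        rw [e11, Nat.mod_eq_of_lt (by omega)]; omega
      have hs2 : (j:ℕ) + (m2 % (n+1)) + ((n - j - m2) % (n+1)) = n := by
        rw [e12, Nat.mod_eq_of_lt (by omega)]; omega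
      obtain ⟨hmem1, _, hon1⟩ := hx j ⟨m1 % (n+1), Nat.mod_lt _ (by omega)⟩ ⟨(n - j - m1) % (n+1), Nat.mod_lt _ (by omega)⟩ hs1
      obtain ⟨hmem2, _, hon2⟩ := hx j ⟨m2 % (n+1), Nat.mod_lt _ (by omega)⟩ ⟨(n - j - m2) % (n+1), Nat.mod_lt _ (by omega)⟩ hs2
      simp only at heq
      rw [heq] at hon1
      have := hu1 _ hmem2 _ _ hon1 hon2
      have := congrArg Fin.val this
      simp only at this
      omega

set_option maxHeartbeats 2000000 in
lemma master (n : ℕ) (X : Finset (ℝ × ℝ))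
    (e0 e1 e2 : Fin (n+1) → MvPolynomial (Fin 2) ℝ)
    (hlin0 : ∀ j, IsLinearPoly (e0 j)) (hlin1 : ∀ j, IsLinearPoly (e1 j))
    (hlin2 : ∀ j, IsLinearPoly (e2 j))
    (hiff : ∀ i j k : Fin (n + 1),
      (∃ P ∈ X, OnLine (e0 i) P ∧ OnLine (e1 j) P ∧ OnLine (e2 k) P) ↔
        (i : ℕ) + j + k = n)
    (x : Fin (n + 1) → Fin (n + 1) → Fin (n + 1) → ℝ × ℝ)
    (hx : ∀ a b c : Fin (n + 1), (a : ℕ) + b + c = n →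
      x a b c ∈ X ∧ OnLine (e0 a) (x a b c) ∧ OnLine (e1 b) (x a b c) ∧
        OnLine (e2 c) (x a b c))
    (hXeq : ∀ P ∈ X, ∃ a b c : Fin (n + 1), (a : ℕ) + b + c = n ∧ P = x a b c)
    (i : Fin (n + 1))
    (hn2 : 2 ≤ (X.filter (fun A => OnLine (e0 i) A)).card)
    (hnn : (X.filter (fun A => OnLine (e0 i) A)).card ≤ n) :
    (¬ ∃ A ∈ X, OnLine (e0 0) A ∧ OnLine (e0 i) A) ∧
    (∃ A ∈ X, ∃ B ∈ X, A ≠ B ∧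
      OnLine (e1 0) A ∧ OnLine (e0 i) A ∧ OnLine (e2 0) B ∧ OnLine (e0 i) B) ∧
    Lowering n X (e0 i) = X.filter (fun A => ¬ OnLine (e0 0) A) := by
  -- coordinates of each node
  have hco : ∀ P ∈ X, ∃ a b c : Fin (n+1), (a:ℕ)+b+c = n ∧ P = x a b c ∧
      OnLine (e0 a) P ∧ OnLine (e1 b) P ∧ OnLine (e2 c) P := by
    intro P hP
    obtain ⟨a, b, c, hs, hpt⟩ := hXeq P hP
    obtain ⟨hm, h0, h1, h2⟩ := hx a b c hs
    exact ⟨a, b, c, hs, hpt, by rw [hpt]; exact h0, by rw [hpt]; exact h1,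
      by rw [hpt]; exact h2⟩
  -- uniqueness of the index in each family
  have hu0 : ∀ P ∈ X, ∀ a a' : Fin (n+1), OnLine (e0 a) P → OnLine (e0 a') P → a = a' :=
    uniq_of n X e0 e1 e2 (fun a b c h => (hiff a b c).mp h)
      (fun P hP => by obtain ⟨a,b,c,_,_,h0,h1,h2⟩ := hco P hP; exact ⟨a,b,c,h0,h1,h2⟩)
  have hu1 : ∀ P ∈ X, ∀ b b' : Fin (n+1), OnLine (e1 b) P → OnLine (e1 b') P → b = b' :=
    uniq_of n X e1 e0 e2
      (fun b a c h => by
        obtain ⟨P, hP, h1, h0, h2⟩ := h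
        have := (hiff a b c).mp ⟨P, hP, h0, h1, h2⟩; omega)
      (fun P hP => by obtain ⟨a,b,c,_,_,h0,h1,h2⟩ := hco P hP; exact ⟨b,a,c,h1,h0,h2⟩)
  have hu2 : ∀ P ∈ X, ∀ c c' : Fin (n+1), OnLine (e2 c) P → OnLine (e2 c') P → c = c' :=
    uniq_of n X e2 e0 e1
      (fun c a b h => by
        obtain ⟨P, hP, h2, h0, h1⟩ := h
        have := (hiff a b c).mp ⟨P, hP, h0, h1, h2⟩; omega)
      (fun P hP => by obtain ⟨a,b,c,_,_,h0,h1,h2⟩ := hco P hP; exact ⟨c,a,b,h2,h0,h1⟩)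
  -- counts
  have hc0 : ∀ j : Fin (n+1), (X.filter (fun A => OnLine (e0 j) A)).card = n + 1 - j :=
    count_of n X e0 e1 x
      (fun a b c h => by obtain ⟨hm, h0, h1, _⟩ := hx a b c h; exact ⟨hm, h0, h1⟩)
      (fun P hP => by obtain ⟨a,b,c,hs,hpt,h0,h1,_⟩ := hco P hP; exact ⟨a,b,c,hs,hpt,h0,h1⟩)
      hu0 hu1
  have hc1 : ∀ j : Fin (n+1), (X.filter (fun A => OnLine (e1 j) A)).card = n + 1 - j :=
    count_of n X e1 e0 (fun b a c => x a b c)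
      (fun b a c h => by obtain ⟨hm, h0, h1, _⟩ := hx a b c (by omega); exact ⟨hm, h1, h0⟩)
      (fun P hP => by
        obtain ⟨a,b,c,hs,hpt,h0,h1,_⟩ := hco P hP
        exact ⟨b,a,c, by omega, hpt, h1, h0⟩)
      hu1 hu0
  have hc2 : ∀ j : Fin (n+1), (X.filter (fun A => OnLine (e2 j) A)).card = n + 1 - j :=
    count_of n X e2 e0 (fun c a b => x a b c)
      (fun c a b h => by obtain ⟨hm, h0, _, h2⟩ := hx a b c (by omega); exact ⟨hm, h2, h0⟩)
      (fun P hP => by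
        obtain ⟨a,b,c,hs,hpt,h0,_,h2⟩ := hco P hP
        exact ⟨c,a,b, by omega, hpt, h2, h0⟩)
      hu2 hu0
  -- bounds on i
  have hi0 : (X.filter (fun A => OnLine (e0 i) A)).card = n + 1 - i := hc0 i
  have hil : 1 ≤ (i:ℕ) := by have := i.isLt; omega
  have hiu : (i:ℕ) < n := by have := i.isLt; omega
  have hn2' : 2 ≤ n := by omega
  -- part 1
  have part1 : ¬ ∃ A ∈ X, OnLine (e0 0) A ∧ OnLine (e0 i) A := by
    rintro ⟨A, hA, h0, hi⟩
    have := hu0 A hA 0 i h0 hi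
    have := congrArg Fin.val this
    simp only [Fin.val_zero] at this
    omega
  -- part 2
  have hbfin : ((⟨n - i, by omega⟩ : Fin (n+1)) : ℕ) = n - i := rfl
  have hsA : (i:ℕ) + ((0 : Fin (n+1)):ℕ) + ((⟨n - i, by omega⟩ : Fin (n+1)):ℕ) = n := by
    simp only [Fin.val_zero, hbfin]; omega
  have hsB : (i:ℕ) + ((⟨n - i, by omega⟩ : Fin (n+1)):ℕ) + ((0 : Fin (n+1)):ℕ) = n := by
    simp only [Fin.val_zero, hbfin]; omega
  obtain ⟨hAmem, hA0, hA1, hA2⟩ := hx i 0 ⟨n - i, by omega⟩ hsA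
  obtain ⟨hBmem, hB0, hB1, hB2⟩ := hx i ⟨n - i, by omega⟩ 0 hsB
  have hABne : x i 0 ⟨n - i, by omega⟩ ≠ x i ⟨n - i, by omega⟩ 0 := by
    intro h
    rw [h] at hA1
    have := hu1 _ hBmem _ _ hA1 hB1
    have := congrArg Fin.val this
    simp only [Fin.val_zero, hbfin] at this
    omega
  have part2 : ∃ A ∈ X, ∃ B ∈ X, A ≠ B ∧
      OnLine (e1 0) A ∧ OnLine (e0 i) A ∧ OnLine (e2 0) B ∧ OnLine (e0 i) B :=
    ⟨_, hAmem, _, hBmem, hABne, hA1, hA0, hB2, hB0⟩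
  -- classification of maximal lines
  have hmaxclass : ∀ lam, IsMaximalLine n X lam →
      SameLine lam (e0 0) ∨ SameLine lam (e1 0) ∨ SameLine lam (e2 0) := by
    intro lam hlam
    obtain ⟨hlamlin, hlamcard⟩ := hlam
    let T : Finset (ℝ × ℝ) := X.filter (fun A => OnLine lam A)
    have hTmem : ∀ P, P ∈ T ↔ P ∈ X ∧ OnLine lam P := fun P => Finset.mem_filter
    have hcardT : T.card = n + 1 := hlamcard
    by_cases hrep : ∃ P ∈ T, ∃ Q ∈ T, P ≠ Q ∧ ∃ a : Fin (n+1),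
        (OnLine (e0 a) P ∧ OnLine (e0 a) Q) ∨ (OnLine (e1 a) P ∧ OnLine (e1 a) Q) ∨
        (OnLine (e2 a) P ∧ OnLine (e2 a) Q)
    · obtain ⟨P, hP, Q, hQ, hPQ, a, hcase⟩ := hrep
      obtain ⟨hPX, hPlam⟩ := (hTmem P).mp hP
      obtain ⟨hQX, hQlam⟩ := (hTmem Q).mp hQ
      have key : ∀ (es : Fin (n+1) → MvPolynomial (Fin 2) ℝ),
          (∀ j, IsLinearPoly (es j)) →
          (∀ j : Fin (n+1), (X.filter (fun A => OnLine (es j) A)).card = n + 1 - j) →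
          OnLine (es a) P → OnLine (es a) Q → SameLine lam (es 0) := by
        intro es hlins hcs hPa hQa
        have hsl : SameLine lam (es a) :=
          two_points_same_line hlamlin (hlins a) hPQ hPlam hQlam hPa hQa
        have hfilter : X.filter (fun A => OnLine lam A) =
            X.filter (fun A => OnLine (es a) A) := by
          apply Finset.filter_congr
          intro A _
          exact hsl A
        have h1 : (X.filter (fun A => OnLine lam A)).card = n + 1 - (a:ℕ) := by
          rw [hfilter]; exact hcs a
        have hcard : n + 1 = n + 1 - (a:ℕ) := hlamcard.symm.trans h1
        have ha0 : a = 0 := Fin.ext (by simp only [Fin.val_zero]; omega)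
        rw [ha0] at hsl
        exact hsl
      rcases hcase with h | h | h
      · exact Or.inl (key e0 hlin0 hc0 h.1 h.2)
      · exact Or.inr (Or.inl (key e1 hlin1 hc1 h.1 h.2))
      · exact Or.inr (Or.inr (key e2 hlin2 hc2 h.1 h.2))
    · exfalso
      choose fa fb fc hsum hpt h0 h1 h2 using hco
      have hTX : ∀ P ∈ T, P ∈ X := fun P hP => ((hTmem P).mp hP).1
      have mkinj : ∀ (es : Fin (n+1) → MvPolynomial (Fin 2) ℝ)
          (f : (P : ℝ × ℝ) → P ∈ X → Fin (n+1)),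
          (∀ (P : ℝ × ℝ) (h : P ∈ X), OnLine (es (f P h)) P) →
          (∀ (P Q : ℝ × ℝ), P ∈ T → Q ∈ T → P ≠ Q → ∀ a : Fin (n+1),
            OnLine (es a) P → OnLine (es a) Q → False) →
          Set.InjOn (fun P => if h : P ∈ X then ((f P h : ℕ)) else 0) ↑T := by
        intro es f hf hnorep P hP Q hQ hgPQ
        have hPT : P ∈ T := hP
        have hQT : Q ∈ T := hQ
        by_contra hne
        have hPX := hTX P hPT
        have hQX := hTX Q hQT
        simp only [dif_pos hPX, dif_pos hQX] at hgPQ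
        have hfeq : f P hPX = f Q hQX := Fin.ext hgPQ
        exact hnorep P Q hPT hQT hne (f P hPX) (hf P hPX) (hfeq ▸ hf Q hQX)
      have hsum_img : ∀ (g : ℝ × ℝ → ℕ), Set.InjOn g ↑T → (∀ P ∈ T, g P < n + 1) →
          ∑ P ∈ T, g P = ∑ m ∈ Finset.range (n+1), m := by
        intro g hinj hlt
        have himg : T.image g = Finset.range (n+1) := by
          apply Finset.eq_of_subset_of_card_le
          · intro m hm
            obtain ⟨P, hP, rfl⟩ := Finset.mem_image.mp hm
            exact Finset.mem_range.mpr (hlt P hP)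
          · rw [Finset.card_image_of_injOn hinj, hcardT, Finset.card_range]
        rw [← himg]
        exact (Finset.sum_image (f := fun m => m) (fun x hx y hy h => hinj hx hy h)).symm
      have hlt : ∀ (f : (P : ℝ × ℝ) → P ∈ X → Fin (n+1)), ∀ P ∈ T,
          (if h : P ∈ X then ((f P h : ℕ)) else 0) < n + 1 := by
        intro f P hP
        rw [dif_pos (hTX P hP)]
        exact (f P (hTX P hP)).isLt
      have hinj0 := mkinj e0 fa h0
        (fun P Q hP hQ hne a hp hq => hrep ⟨P, hP, Q, hQ, hne, a, Or.inl ⟨hp, hq⟩⟩)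
      have hinj1 := mkinj e1 fb h1
        (fun P Q hP hQ hne a hp hq => hrep ⟨P, hP, Q, hQ, hne, a, Or.inr (Or.inl ⟨hp, hq⟩)⟩)
      have hinj2 := mkinj e2 fc h2
        (fun P Q hP hQ hne a hp hq => hrep ⟨P, hP, Q, hQ, hne, a, Or.inr (Or.inr ⟨hp, hq⟩)⟩)
      have hga := hsum_img _ hinj0 (hlt fa)
      have hgb := hsum_img _ hinj1 (hlt fb)
      have hgc := hsum_img _ hinj2 (hlt fc)
      have htot : ∑ P ∈ T, ((if h : P ∈ X then ((fa P h : ℕ)) else 0) +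
          (if h : P ∈ X then ((fb P h : ℕ)) else 0) +
          (if h : P ∈ X then ((fc P h : ℕ)) else 0)) = (n+1) * n := by
        rw [Finset.sum_congr rfl (fun P hP => by
          rw [dif_pos (hTX P hP), dif_pos (hTX P hP), dif_pos (hTX P hP)]
          exact hsum P (hTX P hP))]
        rw [Finset.sum_const, hcardT, smul_eq_mul]
      rw [Finset.sum_add_distrib, Finset.sum_add_distrib, hga, hgb, hgc] at htot
      have h2S : (∑ m ∈ Finset.range (n+1), m) * 2 = (n + 1) * n := by
        have := Finset.sum_range_id_mul_two (n+1)
        simpa using this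
      have hS0 : (∑ m ∈ Finset.range (n+1), m) = 0 := by omega
      rw [hS0] at h2S
      simp only [Nat.zero_mul] at h2S
      rcases Nat.mul_eq_zero.mp h2S.symm with h | h <;> omega
  -- part 3 key
  have hbfinv : ((⟨n - i, by omega⟩ : Fin (n+1)) : ℕ) = n - i := rfl
  have hkey : ∀ A ∈ X,
      ((∃ lam, (IsDisjointMax n X (e0 i) lam ∨ IsAdjointMax n X (e0 i) lam) ∧
        OnLine lam A) ↔ OnLine (e0 0) A) := by
    intro A hA
    constructor
    · rintro ⟨lam, hd | had, hlamA⟩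
      · obtain ⟨hmax, hdis⟩ := hd
        rcases hmaxclass lam hmax with h | h | h
        · exact (h A).mp hlamA
        · exact absurd ⟨(h _).mpr hA1, hA0⟩ (hdis _ hAmem)
        · exact absurd ⟨(h _).mpr hB2, hB0⟩ (hdis _ hBmem)
      · obtain ⟨hmax, lam', hmax', hnsame, A₀, hA₀, hlamA₀, hlam'A₀, hlA₀⟩ := had
        rcases hmaxclass lam hmax with h | h | h
        · exact (h A).mp hlamA
        · exfalso
          rcases hmaxclass lam' hmax' with h' | h' | h'
          · -- A₀ on e0 0 and e0 i
            have h00 := (h' A₀).mp hlam'A₀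
            have := hu0 A₀ hA₀ 0 i h00 hlA₀
            have := congrArg Fin.val this
            simp only [Fin.val_zero] at this
            omega
          · exact hnsame fun P => (h P).trans (h' P).symm
          · have hsum3 := (hiff i 0 0).mp ⟨A₀, hA₀, hlA₀, (h A₀).mp hlamA₀,
              (h' A₀).mp hlam'A₀⟩
            simp only [Fin.val_zero] at hsum3
            omega
        · exfalso
          rcases hmaxclass lam' hmax' with h' | h' | h'
          · have h00 := (h' A₀).mp hlam'A₀
            have := hu0 A₀ hA₀ 0 i h00 hlA₀
            have := congrArg Fin.val this
            simp only [Fin.val_zero] at this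
            omega
          · have hsum3 := (hiff i 0 0).mp ⟨A₀, hA₀, hlA₀, (h' A₀).mp hlam'A₀,
              (h A₀).mp hlamA₀⟩
            simp only [Fin.val_zero] at hsum3
            omega
          · exact hnsame fun P => (h P).trans (h' P).symm
    · intro h00
      refine ⟨e0 0, Or.inl ⟨⟨hlin0 0, ?_⟩, fun B hB hBoth => part1 ⟨B, hB, hBoth⟩⟩, h00⟩
      rw [hc0 0]
      simp
  refine ⟨part1, part2, ?_⟩
  ext A
  simp only [Lowering, Finset.mem_filter]
  constructor
  · rintro ⟨hA, hno⟩
    exact ⟨hA, fun h => hno ((hkey A hA).mpr h)⟩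
  · rintro ⟨hA, hno⟩
    exact ⟨hA, fun h => hno ((hkey A hA).mp h)⟩
/-- In a generalized principal lattice of degree `n`, for a used line
`ℓ = ℓ_i^r` with between `2` and `n` nodes, the maximal line `ℓ_0^r` meets `ℓ` at no
node of `X`, the other two maximal lines `ℓ_0^{r'}` (`r' ≠ r`) meet `ℓ` at two distinct
nodes, and therefore `X̂(ℓ) = X \ ℓ_0^r`. -/
theorem GPL_lowering
    (n : ℕ) (X : Finset (ℝ × ℝ))
    (ell : Fin 3 → Fin (n + 1) → MvPolynomial (Fin 2) ℝ)
    (hlin : ∀ r i, IsLinearPoly (ell r i))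
    (hdist : ∀ r i r' i', (r, i) ≠ (r', i') → ¬ SameLine (ell r i) (ell r' i'))
    (hiff : ∀ i j k : Fin (n + 1),
      (∃ P ∈ X, OnLine (ell 0 i) P ∧ OnLine (ell 1 j) P ∧ OnLine (ell 2 k) P) ↔
        (i : ℕ) + j + k = n)
    (x : Fin (n + 1) → Fin (n + 1) → Fin (n + 1) → ℝ × ℝ)
    (hx : ∀ i j k : Fin (n + 1), (i : ℕ) + j + k = n →
      x i j k ∈ X ∧ OnLine (ell 0 i) (x i j k) ∧ OnLine (ell 1 j) (x i j k) ∧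
        OnLine (ell 2 k) (x i j k))
    (hXeq : ∀ P ∈ X, ∃ i j k : Fin (n + 1), (i : ℕ) + j + k = n ∧ P = x i j k)
    (r : Fin 3) (i : Fin (n + 1))
    (hnodes2 : 2 ≤ (X.filter (fun A => OnLine (ell r i) A)).card)
    (hnodesn : (X.filter (fun A => OnLine (ell r i) A)).card ≤ n) :
    (¬ ∃ A ∈ X, OnLine (ell r 0) A ∧ OnLine (ell r i) A) ∧
    (∀ r₁ r₂ : Fin 3, r₁ ≠ r → r₂ ≠ r → r₁ ≠ r₂ →
      ∃ A ∈ X, ∃ B ∈ X, A ≠ B ∧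
        OnLine (ell r₁ 0) A ∧ OnLine (ell r i) A ∧
        OnLine (ell r₂ 0) B ∧ OnLine (ell r i) B) ∧
    Lowering n X (ell r i) = X.filter (fun A => ¬ OnLine (ell r 0) A) := by

  have inst1 : ∀ (i j k : Fin (n + 1)),
      (∃ P ∈ X, OnLine (ell 1 i) P ∧ OnLine (ell 0 j) P ∧ OnLine (ell 2 k) P) ↔
        (i : ℕ) + j + k = n := by
    intro a b c
    constructor
    · rintro ⟨P, hP, h1, h0, h2⟩
      have := (hiff b a c).mp ⟨P, hP, h0, h1, h2⟩
      omega
    · intro h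
      obtain ⟨P, hP, h0, h1, h2⟩ := (hiff b a c).mpr (by omega)
      exact ⟨P, hP, h1, h0, h2⟩
  have inst2 : ∀ (i j k : Fin (n + 1)),
      (∃ P ∈ X, OnLine (ell 2 i) P ∧ OnLine (ell 0 j) P ∧ OnLine (ell 1 k) P) ↔
        (i : ℕ) + j + k = n := by
    intro a b c
    constructor
    · rintro ⟨P, hP, h2, h0, h1⟩
      have := (hiff b c a).mp ⟨P, hP, h0, h1, h2⟩
      omega
    · intro h
      obtain ⟨P, hP, h0, h1, h2⟩ := (hiff b c a).mpr (by omega)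
      exact ⟨P, hP, h2, h0, h1⟩
  fin_cases r
  · -- r = 0
    obtain ⟨p1, p2, p3⟩ := master n X (ell 0) (ell 1) (ell 2) (hlin 0) (hlin 1) (hlin 2)
      hiff x hx hXeq i hnodes2 hnodesn
    refine ⟨p1, ?_, p3⟩
    intro r₁ r₂ h1 h2 h12
    obtain ⟨A, hA, B, hB, hAB, hA1, hA0, hB2, hB0⟩ := p2
    fin_cases r₁ <;> fin_cases r₂ <;>
      first
      | exact absurd rfl h1
      | exact absurd rfl h2
      | exact absurd rfl h12
      | exact ⟨A, hA, B, hB, hAB, hA1, hA0, hB2, hB0⟩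
      | exact ⟨B, hB, A, hA, hAB.symm, hB2, hB0, hA1, hA0⟩
  · -- r = 1
    obtain ⟨p1, p2, p3⟩ := master n X (ell 1) (ell 0) (ell 2) (hlin 1) (hlin 0) (hlin 2)
      inst1 (fun a b c => x b a c)
      (fun a b c h => by
        obtain ⟨hm, h0, h1, h2⟩ := hx b a c (by omega)
        exact ⟨hm, h1, h0, h2⟩)
      (fun P hP => by
        obtain ⟨a, b, c, hs, hpt⟩ := hXeq P hP
        exact ⟨b, a, c, by omega, hpt⟩)
      i hnodes2 hnodesn
    refine ⟨p1, ?_, p3⟩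
    intro r₁ r₂ h1 h2 h12
    obtain ⟨A, hA, B, hB, hAB, hA1, hA0, hB2, hB0⟩ := p2
    fin_cases r₁ <;> fin_cases r₂ <;>
      first
      | exact absurd rfl h1
      | exact absurd rfl h2
      | exact absurd rfl h12
      | exact ⟨A, hA, B, hB, hAB, hA1, hA0, hB2, hB0⟩
      | exact ⟨B, hB, A, hA, hAB.symm, hB2, hB0, hA1, hA0⟩
  · -- r = 2
    obtain ⟨p1, p2, p3⟩ := master n X (ell 2) (ell 0) (ell 1) (hlin 2) (hlin 0) (hlin 1)
      inst2 (fun a b c => x b c a)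
      (fun a b c h => by
        obtain ⟨hm, h0, h1, h2⟩ := hx b c a (by omega)
        exact ⟨hm, h2, h0, h1⟩)
      (fun P hP => by
        obtain ⟨a, b, c, hs, hpt⟩ := hXeq P hP
        exact ⟨c, a, b, by omega, hpt⟩)
      i hnodes2 hnodesn
    refine ⟨p1, ?_, p3⟩
    intro r₁ r₂ h1 h2 h12
    obtain ⟨A, hA, B, hB, hAB, hA1, hA0, hB2, hB0⟩ := p2
    fin_cases r₁ <;> fin_cases r₂ <;>
      first
      | exact absurd rfl h1
      | exact absurd rfl h2
      | exact absurd rfl h12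
      | exact ⟨A, hA, B, hB, hAB, hA1, hA0, hB2, hB0⟩
      | exact ⟨B, hB, A, hA, hAB.symm, hB2, hB0, hA1, hA0⟩
end
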